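/- arXiv:0901.4400 — 3 statements merged into one kernel-verified Lean document; each statement's English description precedes it below -/
import Mathlib

section
/- Let f(x) = Σ_{j=1}^{n+1} c_j x^{a_j} where the exponent vectors a_1,...,a_{n+1} ∈ Z^n affinely span R^n and all coefficients c_j are nonzero and have the same sign. Then f has a zero in (R^*)^n (all coordinates nonzero) if and only if there exist indices i ∈ {1,...,n} and j, j' ∈ {1,...,n+1} such that a_{i,j} − a_{i,j'} is odd. -/
/-!
If all exponent differences are even, every monomial `x ^ a j` has the sign of `x ^ a 0`, so
all terms of `f` have the same strict sign and `f` does not vanish. Conversely, if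
`a j i₀ - a j' i₀` is odd, take `x` to be a positive vector `y` with the sign of its `i₀`-th
coordinate flipped: then `f x = ∑ j, c j * (-1) ^ a j i₀ * y ^ a j`, whose coefficients take
both signs, so some positive vector `w` is orthogonal to them. Because the `a j - a 0` form a
basis, taking logarithms shows that `y ↦ (y ^ (a j - a 0))_j` maps the positive orthant onto
itself, so `y` can be chosen with `y ^ a j` proportional to `w j`.
-/

open Finset Matrix

lemma Real.exp_zpow (x : ℝ) (m : ℤ) : Real.exp x ^ m = Real.exp (x * m) := by
  rw [← Real.rpow_intCast, ← Real.exp_mul]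

theorem prod_zpow_eq_mul_prod_zpow_sub {ι G : Type*} [Fintype ι] [CommGroupWithZero G]
    {x : ι → G} (hx : ∀ i, x i ≠ 0) (e f : ι → ℤ) :
    ∏ i, x i ^ e i = (∏ i, x i ^ f i) * ∏ i, x i ^ (e i - f i) := by
  rw [← prod_mul_distrib]
  exact prod_congr rfl fun i _ => by rw [← zpow_add₀ (hx i), add_sub_cancel]

theorem prod_update_neg_zpow {ι R : Type*} [Fintype ι] [DecidableEq ι] [Field R]
    (y : ι → R) (i₀ : ι) (e : ι → ℤ) :
    ∏ i, Function.update y i₀ (-y i₀) i ^ e i = (-1) ^ e i₀ * ∏ i, y i ^ e i := by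
  rw [Fintype.prod_eq_mul_prod_compl i₀, Fintype.prod_eq_mul_prod_compl i₀ (fun i => y i ^ e i),
    Function.update_self, neg_eq_neg_one_mul, mul_zpow, mul_assoc]
  congr 2
  exact prod_congr rfl fun i hi => by
    rw [Function.update_of_ne (by simpa using hi)]

theorem exists_pos_prod_zpow_eq {ι : Type*} [Fintype ι] [DecidableEq ι] (b : ι → ι → ℤ)
    (hb : (Matrix.of fun i j => (b j i : ℝ)).det ≠ 0) {w : ι → ℝ} (hw : ∀ j, 0 < w j) :
    ∃ y : ι → ℝ, (∀ i, 0 < y i) ∧ ∀ j, ∏ i, y i ^ b j i = w j := by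
  set M : Matrix ι ι ℝ := of fun i j => (b j i : ℝ)
  set z := (fun j => Real.log (w j)) ᵥ* M⁻¹
  have hz : z ᵥ* M = fun j => Real.log (w j) := by
    rw [vecMul_vecMul, nonsing_inv_mul _ (isUnit_iff_ne_zero.mpr hb),
      vecMul_one]
  refine ⟨fun i => Real.exp (z i), fun i => Real.exp_pos _, fun j => ?_⟩
  have hzj : ∑ i, z i * b j i = Real.log (w j) := congrFun hz j
  simp_rw [Real.exp_zpow, ← Real.exp_sum, hzj, Real.exp_log (hw j)]

theorem exists_pos_prod_zpow_eq_mul {n : ℕ} (a : Fin (n + 1) → Fin n → ℤ)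
    (hspan : Matrix.det (Matrix.of fun i j : Fin n => ((a j.succ i - a 0 i : ℤ) : ℝ)) ≠ 0)
    {w : Fin (n + 1) → ℝ} (hw : ∀ j, 0 < w j) :
    ∃ y : Fin n → ℝ, (∀ i, 0 < y i) ∧ ∃ s : ℝ, ∀ j, ∏ i, y i ^ a j i = s * w j := by
  obtain ⟨y, hy, hyw⟩ := exists_pos_prod_zpow_eq (fun k i => a k.succ i - a 0 i) hspan
    (w := fun k => w k.succ / w 0) fun k => div_pos (hw _) (hw 0)
  refine ⟨y, hy, (∏ i, y i ^ a 0 i) / w 0, fun j => ?_⟩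
  rw [prod_zpow_eq_mul_prod_zpow_sub (fun i => (hy i).ne') (a j) (a 0)]
  cases j using Fin.cases with
  | zero => simp [(hw 0).ne']
  | succ k => rw [hyw k]; field_simp

theorem exists_pos_sum_mul_eq_zero {ι : Type*} [Fintype ι] [DecidableEq ι] {d : ι → ℝ}
    {p m : ι} (h : d p * d m < 0) : ∃ w : ι → ℝ, (∀ j, 0 < w j) ∧ ∑ j, d j * w j = 0 := by
  -- raising the weight of a coefficient of sign opposite to `∑ j, d j` cancels the sum
  obtain ⟨k, hk, hD⟩ : ∃ k, d k ≠ 0 ∧ (∑ j, d j) * d k ≤ 0 := by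
    by_cases hp : (∑ j, d j) * d p ≤ 0
    · exact ⟨p, fun h0 => by simp [h0] at h, hp⟩
    · refine ⟨m, fun h0 => by simp [h0] at h, not_lt.mp fun hm => ?_⟩
      nlinarith [mul_pos (not_le.mp hp) hm,
        mul_nonpos_of_nonneg_of_nonpos (sq_nonneg (∑ j, d j)) h.le]
  have hDk : (∑ j, d j) / d k ≤ 0 := by
    rw [← mul_div_mul_right _ _ hk]; exact div_nonpos_of_nonpos_of_nonneg hD (mul_self_nonneg _)
  refine ⟨1 - ((∑ j, d j) / d k) • Pi.single k 1, fun j => ?_, ?_⟩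
  · rcases eq_or_ne j k with rfl | hj
    · simp only [Pi.sub_apply, Pi.one_apply, Pi.smul_apply, Pi.single_eq_same, smul_eq_mul,
        mul_one, sub_pos]
      linarith
    · simp [hj]
  · change d ⬝ᵥ _ = 0
    rw [dotProduct_sub, dotProduct_smul, dotProduct_single, dotProduct_one, smul_eq_mul,
      mul_one, div_mul_cancel₀ _ hk, sub_self]

theorem sum_mul_prod_zpow_ne_zero {ι κ : Type*} [Fintype ι] [Fintype κ] [Nonempty κ]
    {c : κ → ℝ} (hc : (∀ j, 0 < c j) ∨ ∀ j, c j < 0) {a : κ → ι → ℤ}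
    (heven : ∀ i j j', Even (a j i - a j' i)) {x : ι → ℝ} (hx : ∀ i, x i ≠ 0) :
    ∑ j, c j * ∏ i, x i ^ a j i ≠ 0 := by
  obtain ⟨j₀⟩ := ‹Nonempty κ›
  have hP : ∀ j, 0 < ∏ i, x i ^ (a j i - a j₀ i) := fun j =>
    prod_pos fun i _ => (heven i j j₀).zpow_pos (hx i)
  have hsum : ∑ j, c j * ∏ i, x i ^ (a j i - a j₀ i) ≠ 0 := by
    rcases hc with hc | hc
    · exact (sum_pos (fun j _ => mul_pos (hc j) (hP j)) univ_nonempty).ne'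
    · exact (sum_neg (fun j _ => mul_neg_of_neg_of_pos (hc j) (hP j)) univ_nonempty).ne
  have hfactor : ∑ j, c j * ∏ i, x i ^ a j i
      = (∏ i, x i ^ a j₀ i) * ∑ j, c j * ∏ i, x i ^ (a j i - a j₀ i) := by
    rw [mul_sum]
    exact sum_congr rfl fun j _ => by rw [prod_zpow_eq_mul_prod_zpow_sub hx (a j) (a j₀)]; ring
  rw [hfactor]
  exact mul_ne_zero (prod_ne_zero_iff.mpr fun i _ => zpow_ne_zero _ (hx i)) hsum

theorem exists_sum_mul_prod_zpow_eq_zero {n : ℕ} (a : Fin (n + 1) → Fin n → ℤ)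
    (c : Fin (n + 1) → ℝ)
    (hspan : Matrix.det (Matrix.of fun i j : Fin n => ((a j.succ i - a 0 i : ℤ) : ℝ)) ≠ 0)
    (hc : (∀ j, 0 < c j) ∨ ∀ j, c j < 0) {i₀ : Fin n} {j j' : Fin (n + 1)}
    (hodd : Odd (a j i₀ - a j' i₀)) :
    ∃ x : Fin n → ℝ, (∀ i, x i ≠ 0) ∧ ∑ k, c k * ∏ i, x i ^ a k i = 0 := by
  set d := fun k => c k * (-1 : ℝ) ^ a k i₀
  have hd : d j * d j' < 0 := by
    have hsign : (-1 : ℝ) ^ a j i₀ * (-1) ^ a j' i₀ = -1 := by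
      rw [← zpow_add₀ (by norm_num)]
      exact Odd.neg_one_zpow (Int.odd_add.mpr (Int.odd_sub.mp hodd))
    have hcc : 0 < c j * c j' :=
      hc.elim (fun h => mul_pos (h j) (h j')) fun h => mul_pos_of_neg_of_neg (h j) (h j')
    calc d j * d j' = -(c j * c j') := by simp only [d]; linear_combination (c j * c j') * hsign
      _ < 0 := neg_neg_iff_pos.mpr hcc
  obtain ⟨w, hw, hdw⟩ := exists_pos_sum_mul_eq_zero hd
  obtain ⟨y, hy, s, hys⟩ := exists_pos_prod_zpow_eq_mul a hspan hw
  refine ⟨Function.update y i₀ (-y i₀), fun i => ?_, ?_⟩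
  · rcases eq_or_ne i i₀ with rfl | hi
    · simp [(hy i).ne']
    · simp [hi, (hy i).ne']
  · simp_rw [prod_update_neg_zpow, hys]
    calc ∑ k, c k * ((-1) ^ a k i₀ * (s * w k)) = s * ∑ k, d k * w k := by
          rw [mul_sum]; exact sum_congr rfl fun k _ => by ring
      _ = 0 := by rw [hdw, mul_zero]

theorem same_sign_real_feasibility (n : ℕ) (a : Fin (n + 1) → Fin n → ℤ)
    (c : Fin (n + 1) → ℝ)
    (hspan : Matrix.det (Matrix.of fun i j : Fin n =>
        ((a j.succ i - a 0 i : ℤ) : ℝ)) ≠ 0)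
    (hc : (∀ j, 0 < c j) ∨ (∀ j, c j < 0)) :
    (∃ x : Fin n → ℝ, (∀ i, x i ≠ 0) ∧
        ∑ j, c j * ∏ i, x i ^ a j i = 0) ↔
      ∃ (i : Fin n) (j j' : Fin (n + 1)), Odd (a j i - a j' i) := by
  constructor
  · rintro ⟨x, hx, hfx⟩
    by_contra! hodd
    exact sum_mul_prod_zpow_ne_zero hc (fun i j j' => Int.not_odd_iff_even.mp (hodd i j j')) hx
      hfx
  · rintro ⟨i₀, j, j', hodd⟩
    exact exists_sum_mul_prod_zpow_eq_zero a c hspan hc hodd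
end

section
/- Let A ⊂ Z^n be a non-degenerate circuit with signed minor vector b (so Σ b_i = 0 and Σ b_i a_i = 0, all b_i ≠ 0). Suppose the positive zero set Z_+(f) of f(x) = Σ_{i=1}^{n+2} c_i x^{a_i} contains a degenerate point ζ ∈ R_+^n (i.e., f(ζ) = 0 and ∇f(ζ) = 0). Then sign(c_1 b_1) = sign(c_2 b_2) = ... = sign(c_{n+2} b_{n+2}) and ∏_{i=1}^{n+2} (σ·c_i/b_i)^{σ·b_i} = 1, where σ = sign(b_1 c_1). -/
/-!
At a degenerate positive root ζ the numbers `m i = c i * ζ ^ a i` satisfy `∑ m i = 0` and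
`∑ m i * a i = 0`, i.e. they form an affine dependence of the circuit, so they equal `t * b i`
for one `t ≠ 0`. Hence `c i * b i = t * b i ^ 2 / ζ ^ a i` has the sign of `t` for every `i`,
and `σ * c i / b i = |t| / ζ ^ a i`; raising to `σ * b i` and multiplying, the factors `|t|`
and `ζ` cancel because `∑ b i = 0` and `∑ b i * a i = 0`.
-/

open Finset

theorem Finset.sum_subtype_ne_of_eq_zero {ι M : Type*} [Fintype ι] [DecidableEq ι]
    [AddCommMonoid M] {f : ι → M} {s : ι} (hs : f s = 0) :
    ∑ i : {i // i ≠ s}, f i = ∑ i, f i := by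
  rw [← Finset.sum_erase univ hs]
  exact (Finset.sum_subtype (p := (· ≠ s)) (univ.erase s) (fun _ => by simp) f).symm

/-- The affine dependences of a circuit form a line. -/
theorem AffineIndependent.eq_smul_of_sum_eq_zero {k V ι : Type*} [Field k]
    [AddCommGroup V] [Module k V] [Fintype ι] [DecidableEq ι] {p : ι → V} {s : ι}
    (hp : AffineIndependent k fun i : {i // i ≠ s} => p i) {v w : ι → k}
    (hv : ∑ i, v i = 0) (hvp : ∑ i, v i • p i = 0)
    (hw : ∑ i, w i = 0) (hwp : ∑ i, w i • p i = 0) (hvs : v s ≠ 0) :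
    w = (w s / v s) • v := by
  set u := w - (w s / v s) • v
  have hus : u s = 0 := by simp [u, div_mul_cancel₀ _ hvs]
  have hu : ∑ i, u i = 0 := by
    simp [u, Finset.sum_sub_distrib, ← Finset.mul_sum, hv, hw]
  have hup : ∑ i, u i • p i = 0 := by
    simp [u, sub_smul, Finset.sum_sub_distrib, mul_smul, ← Finset.smul_sum, hvp, hwp]
  have hu0 : ∀ i, u i = 0 := by
    intro i
    by_cases hi : i = s
    · rwa [hi]
    refine hp.eq_zero_of_sum_eq_zero (w := fun j : {i // i ≠ s} => u j) ?_ ?_ ⟨i, hi⟩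
      (mem_univ _)
    · rwa [Finset.sum_subtype_ne_of_eq_zero hus]
    · rwa [Finset.sum_subtype_ne_of_eq_zero (f := fun i => u i • p i) (by simp [hus])]
  exact sub_eq_zero.mp (funext hu0)

theorem Real.sign_mul_of_pos_right (t : ℝ) {r : ℝ} (hr : 0 < r) :
    Real.sign (t * r) = Real.sign t := by
  obtain ht | rfl | ht := lt_trichotomy t 0
  · rw [Real.sign_of_neg ht, Real.sign_of_neg (mul_neg_of_neg_of_pos ht hr)]
  · simp
  · rw [Real.sign_of_pos ht, Real.sign_of_pos (mul_pos ht hr)]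

theorem Real.sign_mul_self_eq_abs (t : ℝ) : Real.sign t * t = |t| := by
  obtain ht | rfl | ht := lt_trichotomy t 0
  · rw [Real.sign_of_neg ht, abs_of_neg ht]; ring
  · simp
  · rw [Real.sign_of_pos ht, abs_of_pos ht, one_mul]

theorem prod_monomial_rpow_eq_one {ι κ : Type*} [Fintype ι] [Fintype κ]
    {a : ι → κ → ℤ} {ζ : κ → ℝ} (hζ : ∀ k, 0 < ζ k) {e : ι → ℝ}
    (he : ∀ k, ∑ i, e i * a i k = 0) :
    ∏ i, (∏ k, ζ k ^ a i k) ^ e i = 1 := by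
  have hmono : ∀ i, (∏ k, ζ k ^ a i k) ^ e i = ∏ k, ζ k ^ (e i * a i k) := fun i => by
    rw [← Real.finsetProd_rpow _ _ fun k _ => (zpow_pos (hζ k) _).le]
    refine Finset.prod_congr rfl fun k _ => ?_
    rw [← Real.rpow_intCast, ← Real.rpow_mul (hζ k).le, mul_comm]
  simp_rw [hmono]
  rw [Finset.prod_comm]
  refine Finset.prod_eq_one fun k _ => ?_
  rw [← Real.rpow_sum_of_pos (hζ k), he k, Real.rpow_zero]

theorem prod_div_monomial_rpow_eq_one {ι κ : Type*} [Fintype ι] [Fintype κ]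
    {a : ι → κ → ℤ} {ζ : κ → ℝ} (hζ : ∀ k, 0 < ζ k) {t : ℝ} (ht : 0 < t) {e : ι → ℝ}
    (he : ∑ i, e i = 0) (hea : ∀ k, ∑ i, e i * a i k = 0) :
    ∏ i, (t / ∏ k, ζ k ^ a i k) ^ e i = 1 := by
  have hmono : ∀ i, 0 ≤ ∏ k, ζ k ^ a i k := fun i =>
    prod_nonneg fun k _ => (zpow_pos (hζ k) _).le
  simp_rw [Real.div_rpow ht.le (hmono _), prod_div_distrib, ← Real.rpow_sum_of_pos ht, he,
    Real.rpow_zero, prod_monomial_rpow_eq_one hζ hea, div_one]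

theorem sign_mul_eq_sign_of_mul_eq {c p t b : ℝ} (hp : 0 < p) (hb : b ≠ 0)
    (h : c * p = t * b) : Real.sign (c * b) = Real.sign t := by
  have hcb : c * b = t * (b ^ 2 / p) := by
    rw [(eq_div_iff hp.ne').mpr h]
    ring
  rw [hcb, Real.sign_mul_of_pos_right t (by positivity)]

theorem sign_mul_div_eq_abs_div_of_mul_eq {c p t b : ℝ} (hp : 0 < p) (hb : b ≠ 0)
    (h : c * p = t * b) : Real.sign t * c / b = |t| / p := by
  rw [← Real.sign_mul_self_eq_abs, div_eq_div_iff hb hp.ne']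
  linear_combination Real.sign t * h

theorem circuit_discriminant_degenerate_point_general (n : ℕ)
    (a : Fin (n + 2) → Fin n → ℤ) (b : Fin (n + 2) → ℤ) (c : Fin (n + 2) → ℝ)
    (hindep : ∀ s : Fin (n + 2), AffineIndependent ℝ
      (fun i : {i : Fin (n + 2) // i ≠ s} => fun k => ((a i.1 k : ℤ) : ℝ)))
    (hb : ∀ i, b i ≠ 0) (hb0 : ∑ i, b i = 0)
    (hba : ∀ k, ∑ i, b i * a i k = 0)
    (hc : ∀ i, c i ≠ 0)
    (ζ : Fin n → ℝ) (hζ : ∀ k, 0 < ζ k)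
    (hroot : ∑ i, c i * ∏ k, ζ k ^ a i k = 0)
    (hdegen : ∀ k, ∑ i, c i * (a i k : ℝ) * ∏ l, ζ l ^ a i l = 0) :
    (∀ i, Real.sign (c i * b i) = Real.sign (c 0 * b 0)) ∧
    (∏ i, (Real.sign (c 0 * b 0) * c i / (b i : ℝ)) ^
        (Real.sign (c 0 * b 0) * (b i : ℝ)) = 1) := by
  set P : Fin (n + 2) → ℝ := fun i => ∏ k, ζ k ^ a i k
  have hP : ∀ i, 0 < P i := fun i => prod_pos fun k _ => zpow_pos (hζ k) _
  have hbR : ∀ i, (b i : ℝ) ≠ 0 := fun i => Int.cast_ne_zero.mpr (hb i)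
  have hbsum : ∑ i, (b i : ℝ) = 0 := by exact_mod_cast hb0
  have hba' : ∀ k, ∑ i, (b i : ℝ) * a i k = 0 := fun k => by exact_mod_cast hba k
  have hbp : ∑ i, (b i : ℝ) • (fun k => (a i k : ℝ)) = 0 :=
    funext fun k => by simpa [Finset.sum_apply] using hba' k
  have hcp : ∑ i, (c i * P i) • (fun k => (a i k : ℝ)) = 0 :=
    funext fun k => by simpa [Finset.sum_apply, P, mul_right_comm] using hdegen k
  set t := c 0 * P 0 / b 0
  have hm : ∀ i, c i * P i = t * b i :=
    congrFun ((hindep 0).eq_smul_of_sum_eq_zero hbsum hbp hroot hcp (hbR 0))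
  have ht : t ≠ 0 := div_ne_zero (mul_ne_zero (hc 0) (hP 0).ne') (hbR 0)
  have hsign : ∀ i, Real.sign (c i * b i) = Real.sign t := fun i =>
    sign_mul_eq_sign_of_mul_eq (hP i) (hbR i) (hm i)
  refine ⟨fun i => (hsign i).trans (hsign 0).symm, ?_⟩
  rw [hsign 0]
  simp_rw [fun i => sign_mul_div_eq_abs_div_of_mul_eq (hP i) (hbR i) (hm i)]
  refine prod_div_monomial_rpow_eq_one hζ (abs_pos.mpr ht) ?_ fun k => ?_
  · rw [← mul_sum, hbsum, mul_zero]
  · simp_rw [mul_assoc, ← mul_sum, hba' k, mul_zero]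

theorem circuit_discriminant_degenerate_point (n : ℕ)
    (a : Fin (n + 2) → Fin n → ℤ) (b : Fin (n + 2) → ℤ) (c : Fin (n + 2) → ℝ)
    (hdep : ¬ AffineIndependent ℝ (fun i k => ((a i k : ℤ) : ℝ)))
    (hindep : ∀ s : Fin (n + 2), AffineIndependent ℝ
      (fun i : {i : Fin (n + 2) // i ≠ s} => fun k => ((a i.1 k : ℤ) : ℝ)))
    (hb : ∀ i, b i ≠ 0) (hb0 : ∑ i, b i = 0)
    (hba : ∀ k, ∑ i, b i * a i k = 0)
    (hc : ∀ i, c i ≠ 0)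
    (ζ : Fin n → ℝ) (hζ : ∀ k, 0 < ζ k)
    (hroot : ∑ i, c i * ∏ k, ζ k ^ a i k = 0)
    (hdegen : ∀ k, ∑ i, c i * (a i k : ℝ) * ∏ l, ζ l ^ a i l = 0) :
    (∀ i, Real.sign (c i * b i) = Real.sign (c 0 * b 0)) ∧
    (∏ i, (Real.sign (c 0 * b 0) * c i / (b i : ℝ)) ^
        (Real.sign (c 0 * b 0) * (b i : ℝ)) = 1) :=
  circuit_discriminant_degenerate_point_general n a b c hindep hb hb0 hba hc ζ hζ hroot hdegen
end

section
/- Let a_1,...,a_{n+1} ∈ Z^n be affinely independent (so Conv{a_1,...,a_{n+1}} is an n-simplex) and let a_{n+2} lie in the interior of this simplex, with barycentric coordinates λ_1,...,λ_{n+1} > 0, Σλ_i = 1, a_{n+2} = Σ λ_i a_i. Suppose f(x) = Σ_{i=1}^{n+1} c_i x^{a_i} − c·x^{a_{n+2}} with all c_i > 0 and c > 0. If c < ∏_{i=1}^{n+1} (c_i/λ_i)^{λ_i}, then f(x) > 0 for all x ∈ R_+^n; in particular f has no zero in the positive orthant. -/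
/-!
By the barycentric relation, the weighted geometric mean `∏ (x^{a_i})^{λ_i}` of the vertex
monomials is the interior monomial `x^{a'}`. Weighted AM-GM applied to the terms
`(c_i / λ_i) x^{a_i}` with weights `λ_i` then gives
`∑ c_i x^{a_i} ≥ (∏ (c_i / λ_i)^{λ_i}) x^{a'} > C x^{a'}`.
-/

open Finset

theorem Real.prod_rpow_prod_zpow_eq_prod_zpow {ι κ : Type*} [Fintype ι] [Fintype κ]
    {x : κ → ℝ} (hx : ∀ k, 0 < x k) {w : ι → ℝ} {a : ι → κ → ℤ} {b : κ → ℤ}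
    (hb : ∀ k, ∑ i, w i * (a i k : ℝ) = b k) :
    ∏ i, (∏ k, x k ^ a i k) ^ w i = ∏ k, x k ^ b k := by
  have hvertex : ∀ i, (∏ k, x k ^ a i k) ^ w i = ∏ k, x k ^ (w i * (a i k : ℝ)) := by
    intro i
    rw [← Real.finsetProd_rpow _ _ fun k _ => (zpow_pos (hx k) _).le]
    refine prod_congr rfl fun k _ => ?_
    rw [← Real.rpow_intCast, ← Real.rpow_mul (hx k).le, mul_comm]
  rw [prod_congr rfl fun i _ => hvertex i, prod_comm]
  refine prod_congr rfl fun k _ => ?_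
  rw [← Real.rpow_sum_of_pos (hx k), hb k, Real.rpow_intCast]

theorem Real.prod_div_rpow_mul_prod_rpow_le_sum_mul {ι : Type*} [Fintype ι]
    {w c y : ι → ℝ} (hw : ∀ i, 0 < w i) (hw_sum : ∑ i, w i = 1)
    (hc : ∀ i, 0 ≤ c i) (hy : ∀ i, 0 ≤ y i) :
    (∏ i, (c i / w i) ^ w i) * ∏ i, y i ^ w i ≤ ∑ i, c i * y i := by
  have hterm : ∀ i, 0 ≤ c i / w i * y i := fun i =>
    mul_nonneg (div_nonneg (hc i) (hw i).le) (hy i)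
  calc (∏ i, (c i / w i) ^ w i) * ∏ i, y i ^ w i
      = ∏ i, (c i / w i * y i) ^ w i := by
        rw [← prod_mul_distrib]
        exact prod_congr rfl fun i _ =>
          (Real.mul_rpow (div_nonneg (hc i) (hw i).le) (hy i)).symm
    _ ≤ ∑ i, w i * (c i / w i * y i) :=
        Real.geom_mean_le_arith_mean_weighted univ w _ (fun i _ => (hw i).le) hw_sum
          fun i _ => hterm i
    _ = ∑ i, c i * y i := sum_congr rfl fun i _ => by
        rw [← mul_assoc, mul_div_cancel₀ _ (hw i).ne']

theorem simplex_circuit_small_coefficient_positive_general (n : ℕ)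
    (a : Fin (n + 1) → Fin n → ℤ) (a' : Fin n → ℤ)
    (lam : Fin (n + 1) → ℝ) (hlam : ∀ i, 0 < lam i) (hsum : ∑ i, lam i = 1)
    (hbary : ∀ k, ∑ i, lam i * (a i k : ℝ) = (a' k : ℝ))
    (c : Fin (n + 1) → ℝ) (hc : ∀ i, 0 < c i) (C : ℝ)
    (hlt : C < ∏ i, (c i / lam i) ^ lam i) :
    ∀ x : Fin n → ℝ, (∀ k, 0 < x k) →
      0 < (∑ i, c i * ∏ k, x k ^ a i k) - C * ∏ k, x k ^ a' k := by
  intro x hx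
  have hamgm := Real.prod_div_rpow_mul_prod_rpow_le_sum_mul (y := fun i => ∏ k, x k ^ a i k)
    hlam hsum (fun i => (hc i).le) fun i => prod_nonneg fun k _ => (zpow_pos (hx k) _).le
  rw [Real.prod_rpow_prod_zpow_eq_prod_zpow hx hbary] at hamgm
  have hsmall : C * ∏ k, x k ^ a' k < (∏ i, (c i / lam i) ^ lam i) * ∏ k, x k ^ a' k :=
    mul_lt_mul_of_pos_right hlt (prod_pos fun k _ => zpow_pos (hx k) _)
  linarith

theorem simplex_circuit_small_coefficient_positive (n : ℕ)
    (a : Fin (n + 1) → Fin n → ℤ) (a' : Fin n → ℤ)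
    (hindep : AffineIndependent ℝ (fun i k => ((a i k : ℤ) : ℝ)))
    (lam : Fin (n + 1) → ℝ) (hlam : ∀ i, 0 < lam i) (hsum : ∑ i, lam i = 1)
    (hbary : ∀ k, ∑ i, lam i * (a i k : ℝ) = (a' k : ℝ))
    (c : Fin (n + 1) → ℝ) (hc : ∀ i, 0 < c i) (C : ℝ) (hC : 0 < C)
    (hlt : C < ∏ i, (c i / lam i) ^ lam i) :
    ∀ x : Fin n → ℝ, (∀ k, 0 < x k) →
      0 < (∑ i, c i * ∏ k, x k ^ a i k) - C * ∏ k, x k ^ a' k :=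
  simplex_circuit_small_coefficient_positive_general n a a' lam hlam hsum hbary c hc C hlt
end
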